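/- arXiv:math/0412170 — 3 statements merged into one kernel-verified Lean document; each statement's English description precedes it below -/
import Mathlib

section
/- In the complex group algebra of the free group F_N on N ≥ 1 generators, the square of the generating operator satisfies X_1 · X_1 = X_2 + 2N·1, where 1 is the identity of the algebra. -/
/-!
Multiplying two length-one words `x y` gives the reduced word `[x, y]` unless `y` is the
inverse letter of `x`, in which case the product is `1`. Every length-two word arises exactly once
this way, and each of the `2N` letters has exactly one inverse, which contributes `2N • 1`.
-/

/-- `Xop N n` is the operator `X_n`: the sum, in the complex group algebra
`ℂ[F_N] = MonoidAlgebra ℂ (FreeGroup (Fin N))`, of the basis elements of all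
words `w` whose reduced word has length `n`. Note `Xop N 0 = 1`. -/
noncomputable def Xop (N n : ℕ) : MonoidAlgebra ℂ (FreeGroup (Fin N)) :=
  ∑ᶠ w ∈ {w : FreeGroup (Fin N) | (FreeGroup.toWord w).length = n},
    MonoidAlgebra.of ℂ (FreeGroup (Fin N)) w

/-- The canonical trace `τ` on `ℂ[F_N]`: the coefficient at the identity. -/
noncomputable def tr {N : ℕ} (a : MonoidAlgebra ℂ (FreeGroup (Fin N))) : ℂ := a.coeff 1

namespace FreeGroup

variable {α : Type*} [DecidableEq α]

theorem IsReduced.toWord_mk {L : List (α × Bool)} (h : IsReduced L) : (mk L).toWord = L :=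
  FreeGroup.toWord_mk.trans h.reduce_eq

theorem toWord_eq_iff {w : FreeGroup α} {L : List (α × Bool)} :
    w.toWord = L ↔ IsReduced L ∧ mk L = w := by
  constructor
  · rintro rfl
    exact ⟨isReduced_toWord, mk_toWord⟩
  · rintro ⟨hL, rfl⟩
    exact hL.toWord_mk

instance : DecidablePred (IsReduced : List (α × Bool) → Prop) :=
  fun L => inferInstanceAs (Decidable (List.IsChain _ L))

omit [DecidableEq α] in
theorem isReduced_pair_iff {x y : α × Bool} : IsReduced [x, y] ↔ y ≠ (x.1, !x.2) := by
  obtain ⟨a, b⟩ := x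
  obtain ⟨c, d⟩ := y
  simp only [isReduced_cons_cons, IsReduced.singleton, and_true, ne_eq, Prod.mk.injEq]
  cases b <;> cases d <;> simp [eq_comm]

omit [DecidableEq α] in
theorem mk_pair_inv (x : α × Bool) : mk [x, (x.1, !x.2)] = 1 :=
  Quot.sound (Red.Step.not (L₁ := []) (L₂ := []))

theorem setOf_toWord_length_eq_one :
    {w : FreeGroup α | w.toWord.length = 1} = Set.range fun x => mk [x] := by
  ext w
  simp [List.length_eq_one_iff, toWord_eq_iff]

theorem setOf_toWord_length_eq_two :
    {w : FreeGroup α | w.toWord.length = 2} =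
      (fun p : (α × Bool) × (α × Bool) => mk [p.1, p.2]) '' {p | IsReduced [p.1, p.2]} := by
  ext w
  simp [List.length_eq_two, toWord_eq_iff]

theorem mk_singleton_injective : Function.Injective fun x : α × Bool => mk [x] := by
  intro x y h
  simpa using congrArg toWord h

theorem injOn_mk_pair :
    Set.InjOn (fun p : (α × Bool) × (α × Bool) => mk [p.1, p.2]) {p | IsReduced [p.1, p.2]} := by
  intro p hp q hq h
  have hwords : [p.1, p.2] = [q.1, q.2] := by
    rw [← IsReduced.toWord_mk hp, ← IsReduced.toWord_mk hq]
    exact congrArg toWord h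
  simp only [List.cons.injEq, and_true] at hwords
  exact Prod.ext hwords.1 hwords.2

section GroupAlgebra

variable (k : Type*) [Semiring k] [Fintype α]

theorem finsum_of_toWord_length_eq_one :
    ∑ᶠ w ∈ {w : FreeGroup α | w.toWord.length = 1}, MonoidAlgebra.of k _ w =
      ∑ x : α × Bool, MonoidAlgebra.of k _ (mk [x]) := by
  rw [setOf_toWord_length_eq_one, finsum_mem_range mk_singleton_injective,
    finsum_eq_sum_of_fintype]

theorem finsum_of_toWord_length_eq_two :
    ∑ᶠ w ∈ {w : FreeGroup α | w.toWord.length = 2}, MonoidAlgebra.of k _ w =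
      ∑ p : (α × Bool) × (α × Bool) with IsReduced [p.1, p.2],
        MonoidAlgebra.of k _ (mk [p.1, p.2]) := by
  rw [setOf_toWord_length_eq_two, finsum_mem_image injOn_mk_pair, ← finsum_mem_coe_finset,
    Finset.coe_filter]
  simp

theorem sum_of_mk_singleton_mul_self :
    (∑ x : α × Bool, MonoidAlgebra.of k _ (mk [x])) * ∑ x : α × Bool, MonoidAlgebra.of k _ (mk [x]) =
      ∑ p : (α × Bool) × (α × Bool) with IsReduced [p.1, p.2],
        MonoidAlgebra.of k _ (mk [p.1, p.2]) + Fintype.card (α × Bool) • 1 := by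
  have hpair (p : (α × Bool) × (α × Bool)) :
      MonoidAlgebra.of k _ (mk [p.1]) * MonoidAlgebra.of k _ (mk [p.2]) =
        MonoidAlgebra.of k _ (mk [p.1, p.2]) := by
    rw [← _root_.map_mul, mul_mk, List.singleton_append]
  have hcancel : ∑ p : (α × Bool) × (α × Bool) with ¬IsReduced [p.1, p.2],
      MonoidAlgebra.of k (FreeGroup α) (mk [p.1, p.2]) = Fintype.card (α × Bool) • 1 := by
    calc _ = ∑ x : α × Bool, MonoidAlgebra.of k (FreeGroup α) (mk [x, (x.1, !x.2)]) := by
          simp only [Finset.sum_filter, isReduced_pair_iff, not_not, Fintype.sum_prod_type,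
            Finset.sum_ite_eq', Finset.mem_univ, if_true]
      _ = Fintype.card (α × Bool) • 1 := by
          simp only [mk_pair_inv, MonoidHom.map_one, Finset.sum_const, Finset.card_univ]
  rw [Finset.sum_mul_sum, ← Fintype.sum_prod_type', ← hcancel, Finset.sum_filter_add_sum_filter_not]
  simp only [hpair]

end GroupAlgebra

end FreeGroup

theorem stmt_0_general (N : ℕ) :
    Xop N 1 * Xop N 1 = Xop N 2 + (2 * N : ℂ) • 1 := by
  rw [Xop, Xop, FreeGroup.finsum_of_toWord_length_eq_one,
    FreeGroup.finsum_of_toWord_length_eq_two, FreeGroup.sum_of_mk_singleton_mul_self]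
  congr 1
  rw [← Nat.cast_smul_eq_nsmul ℂ, Fintype.card_prod, Fintype.card_fin, Fintype.card_bool,
    Nat.cast_mul, Nat.cast_ofNat, mul_comm]

theorem stmt_0 (N : ℕ) (hN : 1 ≤ N) :
    Xop N 1 * Xop N 1 = Xop N 2 + (2 * N : ℂ) • 1 :=
  stmt_0_general N
end

section
/- Let x = X_1 be the generating operator of the complex group algebra of the free group F_N on N ≥ 1 generators. For all natural numbers k, n, p with p ≤ k and 1 ≤ p ≤ n − 1, one has x^k · X_n = x^{k−p} · ( Σ_{i=0}^{p} binom(p,i)·(2N−1)^i · X_{n+p−2i} ). -/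
/-!
Multiplying a reduced word `y` on the left by the inverse of a letter `s` cancels the first
letter of `y` if it is `s` and lengthens `y` by one otherwise. Hence a word of length `n + 1` is
reached from the words of length `n` by exactly one letter, and a word of length `n - 1` by the
`2N - 1` letters other than its first one: `X₁ Xₙ = Xₙ₊₁ + (2N - 1) Xₙ₋₁` for `n ≥ 2`.
Iterating this three-term recurrence `p` times produces binomial coefficients by Pascal's rule,
and `p ≤ n - 1` keeps every index that occurs at least `2`.
-/

open Finset

theorem Fintype.sum_ite_eq_add_card_sub_one_nsmul {β M : Type*} [Fintype β] [DecidableEq β]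
    [AddCommMonoid M] (a : β) (u v : M) :
    ∑ b, (if a = b then u else v) = u + (Fintype.card β - 1) • v := by
  rw [Fintype.sum_eq_add_sum_compl a, if_pos rfl,
    Finset.sum_congr rfl fun b hb => if_neg fun h => by simp [h] at hb,
    Finset.sum_const, Finset.card_compl, Finset.card_singleton]

namespace FreeGroup

variable {α : Type*} [DecidableEq α]

theorem finite_setOf_length_toWord_eq [Finite α] (n : ℕ) :
    {w : FreeGroup α | w.toWord.length = n}.Finite :=
  (List.finite_length_eq _ n).preimage toWord_injective.injOn

theorem length_toWord_inv_mk_singleton_mul (s : α × Bool) (y : FreeGroup α) :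
    ((mk [s])⁻¹ * y).toWord.length =
      if y.toWord.head? = some s then y.toWord.length - 1 else y.toWord.length + 1 := by
  conv_lhs => rw [inv_mk, ← mk_toWord (x := y), mul_mk, toWord_mk]
  rcases h : y.toWord with _ | ⟨hd, tl⟩
  · simp [invRev]
  · have hred : reduce (hd :: tl) = hd :: tl := h ▸ reduce_toWord y
    by_cases hs : s = hd
    · subst hs; simp [invRev, hred]
    · have : ¬ (s.1 = hd.1 ∧ s.2 = hd.2) := by rwa [← Prod.ext_iff]
      simp [invRev, hred, this, Ne.symm hs]

end FreeGroup

open FreeGroup MonoidAlgebra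

theorem Xop_eq_sum_single {N n : ℕ} (S : Finset (FreeGroup (Fin N)))
    (hS : ∀ w, w ∈ S ↔ w.toWord.length = n) : Xop N n = ∑ w ∈ S, single w 1 := by
  rw [Xop, ← finsum_mem_coe_finset]
  congr!
  ext w; simp [hS]

theorem coeff_Xop (N n : ℕ) (w : FreeGroup (Fin N)) :
    (Xop N n).coeff w = if w.toWord.length = n then 1 else 0 := by
  classical
  rw [Xop_eq_sum_single _ fun w => (finite_setOf_length_toWord_eq n).mem_toFinset, coeff_sum,
    Finset.sum_apply']
  simp [coeff_single, Finsupp.single_apply]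

theorem Xop_one (N : ℕ) : Xop N 1 = ∑ s : Fin N × Bool, single (mk [s]) 1 := by
  have hinj : Function.Injective fun s : Fin N × Bool => mk [s] := fun s t h => by
    simpa [toWord_mk, reduce_singleton] using congrArg toWord h
  rw [← Finset.sum_image (f := fun w => single w (1 : ℂ)) hinj.injOn, Xop_eq_sum_single]
  intro w
  simp only [Finset.mem_image, Finset.mem_univ, true_and, List.length_eq_one_iff]
  constructor
  · rintro ⟨s, rfl⟩; exact ⟨s, by simp [toWord_mk]⟩
  · rintro ⟨s, hs⟩; exact ⟨s, by rw [← hs, mk_toWord]⟩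

theorem Xop_one_mul_Xop (N : ℕ) {n : ℕ} (hn : 2 ≤ n) :
    Xop N 1 * Xop N n = Xop N (n + 1) + (2 * N - 1) • Xop N (n - 1) := by
  refine MonoidAlgebra.ext <| Finsupp.ext fun y => ?_
  rw [Xop_one, Finset.sum_mul, coeff_sum, Finset.sum_apply']
  simp only [coeff_single_mul_apply, one_mul, coeff_Xop, length_toWord_inv_mk_singleton_mul,
    coeff_add, coeff_smul, Finsupp.add_apply, Finsupp.smul_apply]
  rcases h : y.toWord with _ | ⟨hd, tl⟩
  · simp only [List.head?_nil, reduceCtorEq, if_false, List.length_nil]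
    simp [show 1 ≠ n by omega, show 0 ≠ n - 1 by omega]
  · simp only [List.head?_cons, Option.some.injEq]
    rw [Finset.sum_congr rfl fun s _ => apply_ite (fun m => if m = n then (1 : ℂ) else 0) _ _ _,
      Fintype.sum_ite_eq_add_card_sub_one_nsmul]
    simp only [List.length_cons, Fintype.card_prod, Fintype.card_fin, Fintype.card_bool]
    have cancel : tl.length + 1 - 1 = n ↔ tl.length + 1 = n + 1 := by omega
    have extend : tl.length + 1 + 1 = n ↔ tl.length + 1 = n - 1 := by omega
    simp only [cancel, extend, mul_comm N 2]

theorem pow_mul_eq_sum_antidiagonal_of_recurrence {A : Type*} [Semiring A] (x : A) (X : ℕ → A)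
    (q : ℕ) (hX : ∀ n, 2 ≤ n → x * X n = X (n + 1) + q • X (n - 1)) {p n : ℕ} (hpn : p ≤ n - 1) :
    x ^ p * X n = ∑ ij ∈ antidiagonal p, p.choose ij.1 • q ^ ij.1 • X (n + ij.2 - ij.1) := by
  induction p with
  | zero => simp
  | succ p ih =>
    rw [pow_succ', mul_assoc, ih (by omega), Finset.mul_sum,
      sum_antidiagonal_choose_succ_nsmul (fun i j => q ^ i • X (n + j - i)), ← sum_add_distrib]
    refine sum_congr rfl fun ⟨i, j⟩ hij => ?_
    rw [HasAntidiagonal.mem_antidiagonal] at hij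
    dsimp only
    rw [mul_smul_comm, mul_smul_comm, hX _ (by omega), smul_add, smul_add,
      ← Nat.choose_symm_of_eq_add hij.symm, pow_succ, mul_smul,
      show n + j - i + 1 = n + (j + 1) - i by omega, Nat.sub_sub]

theorem stmt_2_general (N : ℕ) (k n p : ℕ)
    (hpk : p ≤ k) (hpn : p ≤ n - 1) :
    (Xop N 1) ^ k * Xop N n =
      (Xop N 1) ^ (k - p) *
        ∑ i ∈ Finset.range (p + 1),
          (p.choose i * (2 * N - 1) ^ i : ℕ) • Xop N (n + p - 2 * i) := by
  obtain ⟨m, rfl⟩ := Nat.exists_eq_add_of_le' hpk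
  rw [Nat.add_sub_cancel, pow_add, mul_assoc, pow_mul_eq_sum_antidiagonal_of_recurrence
    (Xop N 1) (Xop N) (2 * N - 1) (fun _ => Xop_one_mul_Xop N) hpn,
    Nat.sum_antidiagonal_eq_sum_range_succ_mk]
  refine congrArg _ (sum_congr rfl fun i hi => ?_)
  rw [mem_range] at hi
  rw [mul_smul, show n + (p - i) - i = n + p - 2 * i by omega]

theorem stmt_2 (N : ℕ) (hN : 1 ≤ N) (k n p : ℕ)
    (hpk : p ≤ k) (hp1 : 1 ≤ p) (hpn : p ≤ n - 1) :
    (Xop N 1) ^ k * Xop N n =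
      (Xop N 1) ^ (k - p) *
        ∑ i ∈ Finset.range (p + 1),
          (p.choose i * (2 * N - 1) ^ i : ℕ) • Xop N (n + p - 2 * i) :=
  stmt_2_general N k n p hpk hpn
end

section
/- Let x = X_1 be the generating operator of the complex group algebra of the free group F_N on N ≥ 1 generators, and let τ be the canonical trace (coefficient at the identity). For every n ≥ 1, τ(x^n · X_n) = 2N·(2N−1)^{n−1}. -/
/-!
Expanding `x ^ n` gives the sum of all products `g₁ ⋯ gₙ` of `n` generators or inverse generators,
and such a product equals an element `w` of length `n` only when `(g₁, …, gₙ)` is the reduced word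
of `w` (the reduced word is a sublist of every spelling). Hence `τ(x ^ n * X_n)` is the number of
elements of length `n`, that is of reduced sequences of `n` letters: `2N` choices for the first
letter and `2N - 1` for each later one, which may be anything but the inverse of its predecessor.
-/

open Finset List

theorem List.card_filter_isChain_ofFn {β : Type*} [Fintype β] (r : β → β → Prop)
    [DecidableRel r] {m : ℕ} (hr : ∀ b, #{a | r a b} = m) (n : ℕ) :
    #{p : Fin (n + 1) → β | (ofFn p).IsChain r} = Fintype.card β * m ^ n := by
  induction n with
  | zero => simp
  | succ n ih =>
    have hcons (a : β) (p : Fin (n + 1) → β) :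
        (ofFn (Fin.cons a p : Fin (n + 2) → β)).IsChain r ↔
          r a (p 0) ∧ (ofFn p).IsChain r := by
      have hp : ofFn p = p 0 :: ofFn fun i => p i.succ := ofFn_succ
      rw [ofFn_cons, hp, isChain_cons_cons]
    calc #{p : Fin (n + 2) → β | (ofFn p).IsChain r}
        = ∑ p : Fin (n + 1) → β, ∑ a, if r a (p 0) ∧ (ofFn p).IsChain r then 1 else 0 := by
          rw [card_filter, ← Fintype.sum_equiv (Fin.consEquiv fun _ => β) _ _ (fun _ => rfl),
            Fintype.sum_prod_type, Finset.sum_comm]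
          simp only [Fin.consEquiv, Equiv.coe_fn_mk, hcons]
      _ = ∑ p : Fin (n + 1) → β, if (ofFn p).IsChain r then m else 0 := by
          refine Fintype.sum_congr _ _ fun p => ?_
          split_ifs with h <;>
            simp only [h, and_true, and_false, ← hr (p 0), card_filter, if_false, sum_const_zero]
      _ = Fintype.card β * m ^ (n + 1) := by
          rw [Finset.sum_ite, sum_const_zero, add_zero, sum_const, smul_eq_mul, ih]
          ring

namespace FreeGroup

variable {α : Type*} [DecidableEq α]

instance : DecidablePred (IsReduced (α := α)) :=
  fun L => inferInstanceAs (Decidable (L.IsChain _))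

theorem norm_inv (w : FreeGroup α) : norm w⁻¹ = norm w := by
  rw [norm, norm, toWord_inv, invRev_length]

theorem norm_mk_of_isReduced {L : List (α × Bool)} (h : IsReduced L) :
    norm (mk L) = L.length := by
  rw [norm, toWord_mk, h.reduce_eq]

theorem eq_toWord_of_mk_eq {L : List (α × Bool)} {w : FreeGroup α} (h : mk L = w)
    (hL : L.length = norm w) : L = w.toWord := by
  subst h
  exact ((Red.sublist reduce.red).eq_of_length hL.symm).symm

variable [Fintype α]

theorem card_filter_mk_ofFn_eq (w : FreeGroup α) :
    #{p : Fin w.toWord.length → α × Bool | mk (ofFn p) = w} = 1 := by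
  refine card_eq_one.2 ⟨w.toWord.get, eq_singleton_iff_unique_mem.2 ⟨?_, fun p hp => ?_⟩⟩
  · simp [mk_toWord]
  · exact ofFn_injective <|
      (eq_toWord_of_mk_eq (mem_filter.1 hp).2 length_ofFn).trans (ofFn_get _).symm

variable (α) in
noncomputable def sphere (n : ℕ) : Finset (FreeGroup α) :=
  ((List.finite_length_eq (α × Bool) n).preimage toWord_injective.injOn).toFinset

theorem mem_sphere {n : ℕ} {w : FreeGroup α} : w ∈ sphere α n ↔ norm w = n :=
  Set.Finite.mem_toFinset _

theorem sum_sphere {M : Type*} [AddCommMonoid M] (f : FreeGroup α → M) (n : ℕ) :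
    ∑ w ∈ sphere α n, f w =
      ∑ p : Fin n → α × Bool with IsReduced (ofFn p), f (mk (ofFn p)) := by
  symm
  refine sum_bij (fun p _ => mk (ofFn p)) (fun p hp => ?_) (fun p hp q hq hpq => ?_)
    (fun w hw => ?_) (fun _ _ => rfl)
  · rw [mem_sphere, norm_mk_of_isReduced (mem_filter.1 hp).2, length_ofFn]
  · have := congrArg toWord hpq
    rwa [toWord_mk, toWord_mk, (mem_filter.1 hp).2.reduce_eq, (mem_filter.1 hq).2.reduce_eq,
      ofFn_inj] at this
  · obtain rfl : w.toWord.length = n := mem_sphere.1 hw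
    exact ⟨w.toWord.get, mem_filter.2 ⟨mem_univ _, by rw [ofFn_get]; exact isReduced_toWord⟩,
      by rw [ofFn_get, mk_toWord]⟩

theorem card_sphere_succ (n : ℕ) :
    #(sphere α (n + 1)) = 2 * Fintype.card α * (2 * Fintype.card α - 1) ^ n := by
  have hpred (b : α × Bool) :
      #({a | a.1 = b.1 → a.2 = b.2} : Finset (α × Bool)) = 2 * Fintype.card α - 1 := by
    have : ({a | a.1 = b.1 → a.2 = b.2} : Finset (α × Bool)) = univ.erase (b.1, !b.2) := by
      ext a
      obtain ⟨a₁, a₂⟩ := a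
      obtain ⟨b₁, b₂⟩ := b
      cases a₂ <;> cases b₂ <;> simp [imp_iff_not_or, or_comm]
    rw [this, card_erase_of_mem (mem_univ _), card_univ, Fintype.card_prod, Fintype.card_bool,
      mul_comm]
  rw [card_eq_sum_ones, sum_sphere, ← card_eq_sum_ones]
  refine (List.card_filter_isChain_ofFn _ hpred n).trans ?_
  rw [Fintype.card_prod, Fintype.card_bool]
  ring

end FreeGroup

namespace MonoidAlgebra

open FreeGroup

variable (k α : Type*) [Semiring k] [Fintype α]

noncomputable def generatorSum : MonoidAlgebra k (FreeGroup α) :=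
  ∑ a : α × Bool, of k (FreeGroup α) (mk [a])

variable {k α}

theorem generatorSum_pow (n : ℕ) :
    generatorSum k α ^ n =
      ∑ p : Fin n → α × Bool, of k (FreeGroup α) (mk (ofFn p)) := by
  induction n with
  | zero => simp [one_def, one_eq_mk]
  | succ n ih =>
    rw [pow_succ', ih, generatorSum, sum_mul_sum, ← Fintype.sum_prod_type',
      ← Fintype.sum_equiv (Fin.consEquiv fun _ => α × Bool) _ _ (fun _ => rfl)]
    simp only [Fin.consEquiv, Equiv.coe_fn_mk, ofFn_cons, ← _root_.map_mul, mul_mk,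
      singleton_append]

variable [DecidableEq α]

theorem coeff_generatorSum_pow (n : ℕ) (w : FreeGroup α) :
    (generatorSum k α ^ n).coeff w =
      #{p : Fin n → α × Bool | mk (ofFn p) = w} := by
  rw [generatorSum_pow, coeff_sum, Finset.sum_apply']
  simp [of_apply, coeff_single, Finsupp.single_apply, sum_boole]

theorem coeff_generatorSum_pow_of_norm_eq {n : ℕ} {w : FreeGroup α} (hw : norm w = n) :
    (generatorSum k α ^ n).coeff w = 1 := by
  obtain rfl : w.toWord.length = n := hw
  rw [coeff_generatorSum_pow, card_filter_mk_ofFn_eq, Nat.cast_one]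

theorem coeff_one_generatorSum_pow_mul_sum_sphere (n : ℕ) :
    (generatorSum k α ^ n *
      ∑ w ∈ sphere α n, of k (FreeGroup α) w).coeff 1 = #(sphere α n) := by
  rw [mul_sum, coeff_sum, Finset.sum_apply', Finset.card_eq_sum_ones, Nat.cast_sum]
  refine sum_congr rfl fun w hw => ?_
  rw [of_apply, coeff_mul_single_apply, one_mul, mul_one, Nat.cast_one,
    coeff_generatorSum_pow_of_norm_eq ((FreeGroup.norm_inv w).trans (mem_sphere.1 hw))]

end MonoidAlgebra

open MonoidAlgebra FreeGroup

theorem Xop_eq_sum_sphere (N n : ℕ) : Xop N n = ∑ w ∈ sphere (Fin N) n, of ℂ _ w := by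
  have : (sphere (Fin N) n : Set (FreeGroup (Fin N))) = {w | w.toWord.length = n} :=
    Set.ext fun _ => mem_sphere
  rw [Xop, ← this, finsum_mem_coe_finset]

theorem Xop_one_s6 (N : ℕ) : Xop N 1 = generatorSum ℂ (Fin N) := by
  rw [Xop_eq_sum_sphere, sum_sphere, generatorSum, filter_true_of_mem fun p _ => ?_]
  · exact Fintype.sum_equiv (Equiv.funUnique (Fin 1) _) _ _ fun p => by simp [ofFn_succ]
  · simp [ofFn_succ, IsReduced.singleton]

theorem stmt_6_general (N : ℕ) (n : ℕ) (hn : 1 ≤ n) :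
    tr ((Xop N 1) ^ n * Xop N n) = (2 * N * (2 * N - 1) ^ (n - 1) : ℕ) := by
  obtain ⟨m, rfl⟩ := Nat.exists_eq_add_of_le' hn
  rw [tr, Xop_one_s6, Xop_eq_sum_sphere, coeff_one_generatorSum_pow_mul_sum_sphere, card_sphere_succ,
    Fintype.card_fin, Nat.add_sub_cancel]

theorem stmt_6 (N : ℕ) (hN : 1 ≤ N) (n : ℕ) (hn : 1 ≤ n) :
    tr ((Xop N 1) ^ n * Xop N n) = (2 * N * (2 * N - 1) ^ (n - 1) : ℕ) :=
  stmt_6_general N n hn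
end
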